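/- arXiv:2307.09379 — 4 statements merged into one kernel-verified Lean document; each statement's English description precedes it below -/
import Mathlib

section
/- For any k ≤ k' and any function f, if the loss function l(x,y) is jointly convex in (x,y), then the expected k-risk dominates the expected k'-risk: E over i.i.d. samples S of size k of l(mean of f(x_i) over S, mean of y_i over S) is at least the corresponding expectation for batches of size k'. -/
/-!
The mean of a batch of `m + 1` samples is the average of its `m + 1` leave-one-out means, and each
leave-one-out batch is itself an i.i.d. batch of size `m`. Jensen's inequality for the convex loss,
integrated over the sample, therefore gives `r_{m+1} ≤ r_m`; induct on the batch size.
-/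

open MeasureTheory

theorem Fin.sum_sum_succAbove {M : Type*} [AddCommGroup M] {m : ℕ} (a : Fin (m + 1) → M) :
    ∑ j : Fin (m + 1), ∑ i : Fin m, a (j.succAbove i) = m • ∑ j, a j := by
  have h j : ∑ i : Fin m, a (j.succAbove i) = ∑ j, a j - a j :=
    eq_sub_of_add_eq' (Fin.sum_univ_succAbove a j).symm
  simp only [h, Finset.sum_sub_distrib, Finset.sum_const, Finset.card_univ, Fintype.card_fin,
    succ_nsmul, add_sub_cancel_right]

namespace BatchRisk

variable {E : Type*} [AddCommGroup E] [Module ℝ E]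

noncomputable def finMean {m : ℕ} (a : Fin m → E) : E := (m : ℝ)⁻¹ • ∑ i, a i

theorem finMean_eq_finMean_finMean_succAbove {m : ℕ} (hm : m ≠ 0) (a : Fin (m + 1) → E) :
    finMean a = finMean fun j => finMean (a ∘ j.succAbove) := by
  have hm' : (m : ℝ) ≠ 0 := Nat.cast_ne_zero.2 hm
  simp only [finMean, Function.comp_apply, ← Finset.smul_sum, Fin.sum_sum_succAbove, smul_smul,
    ← Nat.cast_smul_eq_nsmul ℝ]
  rw [inv_mul_cancel₀ hm', mul_one]

theorem _root_.ConvexOn.map_finMean_le {L : E → ℝ} (hL : ConvexOn ℝ Set.univ L) {m : ℕ}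
    (hm : m ≠ 0) (a : Fin m → E) : L (finMean a) ≤ finMean (L ∘ a) := by
  have hm' : (m : ℝ) ≠ 0 := Nat.cast_ne_zero.2 hm
  simpa only [finMean, Finset.smul_sum, smul_eq_mul, Finset.mul_sum, Function.comp_apply] using
    hL.map_sum_le (t := Finset.univ) (w := fun _ => (m : ℝ)⁻¹) (p := a)
      (fun _ _ => by positivity) (by simp [hm']) (fun _ _ => Set.mem_univ _)

theorem finMean_const {m : ℕ} (hm : m ≠ 0) (c : E) : finMean (fun _ : Fin m => c) = c := by
  rw [finMean, Finset.sum_const, Finset.card_univ, Fintype.card_fin, ← Nat.cast_smul_eq_nsmul ℝ,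
    smul_smul, inv_mul_cancel₀ (Nat.cast_ne_zero.2 hm), one_smul]

theorem finMean_prodMk {m : ℕ} (a b : Fin m → ℝ) :
    finMean (fun i => (a i, b i)) = ((∑ i, a i) / m, (∑ i, b i) / m) := by
  ext <;> simp [finMean, Prod.fst_sum, Prod.snd_sum, div_eq_inv_mul]

theorem integral_finMean {α G : Type*} [MeasurableSpace α] {μ : Measure α}
    [NormedAddCommGroup G] [NormedSpace ℝ G] {m : ℕ} {F : Fin m → α → G}
    (hF : ∀ j, Integrable (F j) μ) :
    ∫ x, finMean (fun j => F j x) ∂μ = finMean fun j => ∫ x, F j x ∂μ := by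
  simp only [finMean, integral_smul, integral_finsetSum _ fun j _ => hF j]

section Sampling

variable {Ω : Type*} [MeasurableSpace Ω] (μ : Measure Ω) [IsProbabilityMeasure μ]

theorem measurePreserving_comp_succAbove {m : ℕ} (j : Fin (m + 1)) :
    MeasurePreserving (fun z : Fin (m + 1) → Ω => z ∘ j.succAbove)
      (Measure.pi fun _ => μ) (Measure.pi fun _ => μ) :=
  measurePreserving_snd.comp (measurePreserving_piFinSuccAbove (fun _ => μ) j)

theorem integral_comp_succAbove {G : Type*} [NormedAddCommGroup G] [NormedSpace ℝ G] {m : ℕ}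
    (F : (Fin m → Ω) → G) (j : Fin (m + 1)) :
    ∫ z, F (z ∘ j.succAbove) ∂Measure.pi (fun _ => μ) = ∫ z, F z ∂Measure.pi (fun _ => μ) := by
  calc ∫ z, F (z ∘ j.succAbove) ∂Measure.pi (fun _ => μ)
      = ∫ p, F p.2 ∂μ.prod (Measure.pi fun _ => μ) :=
        (measurePreserving_piFinSuccAbove (fun _ => μ) j).integral_comp' (fun p => F p.2)
    _ = ∫ z, F z ∂Measure.pi (fun _ => μ) := by simp [integral_fun_snd]

variable (φ : Ω → E) (L : E → ℝ)

noncomputable def batchRisk (m : ℕ) : ℝ :=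
  ∫ z : Fin m → Ω, L (finMean (φ ∘ z)) ∂Measure.pi fun _ => μ

variable {μ φ L}

theorem batchRisk_succ_le (hL : ConvexOn ℝ Set.univ L) {m : ℕ} (hm : m ≠ 0)
    (hint : Integrable (fun z : Fin m → Ω => L (finMean (φ ∘ z))) (Measure.pi fun _ => μ))
    (hint_succ : Integrable (fun z : Fin (m + 1) → Ω => L (finMean (φ ∘ z)))
      (Measure.pi fun _ => μ)) :
    batchRisk μ φ L (m + 1) ≤ batchRisk μ φ L m := by
  have hint_del (j : Fin (m + 1)) :
      Integrable (fun z : Fin (m + 1) → Ω => L (finMean (φ ∘ z ∘ j.succAbove)))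
        (Measure.pi fun _ => μ) :=
    (measurePreserving_comp_succAbove μ j).integrable_comp_of_integrable hint
  have jensen (z : Fin (m + 1) → Ω) :
      L (finMean (φ ∘ z)) ≤ finMean fun j => L (finMean (φ ∘ z ∘ j.succAbove)) := by
    rw [finMean_eq_finMean_finMean_succAbove hm]
    exact hL.map_finMean_le m.succ_ne_zero _
  calc batchRisk μ φ L (m + 1)
      ≤ ∫ z, finMean (fun j => L (finMean (φ ∘ z ∘ j.succAbove))) ∂Measure.pi fun _ => μ :=
        integral_mono hint_succ (by simpa only [finMean, smul_eq_mul] using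
          (integrable_finsetSum _ fun j _ => hint_del j).const_mul _) jensen
    _ = finMean fun _ : Fin (m + 1) => batchRisk μ φ L m := by
        rw [integral_finMean hint_del]
        simp only [integral_comp_succAbove μ (fun z => L (finMean (φ ∘ z))), batchRisk]
    _ = batchRisk μ φ L m := finMean_const m.succ_ne_zero _

theorem batchRisk_le_of_le (hL : ConvexOn ℝ Set.univ L)
    (hint : ∀ m : ℕ, 0 < m →
      Integrable (fun z : Fin m → Ω => L (finMean (φ ∘ z))) (Measure.pi fun _ => μ))
    {k k' : ℕ} (hk : 0 < k) (hkk' : k ≤ k') :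
    batchRisk μ φ L k' ≤ batchRisk μ φ L k := by
  induction k', hkk' using Nat.le_induction with
  | base => exact le_rfl
  | succ n hkn ih =>
    exact (batchRisk_succ_le hL (by omega) (hint n (by omega)) (hint (n + 1) n.succ_pos)).trans ih

end Sampling

end BatchRisk

open BatchRisk in
/-- For a jointly convex loss `l`, the expected batched risk is
monotone non-increasing in the batch size: `r_{k'}(f,D) ≤ r_k(f,D)` for `k ≤ k'`. -/
theorem krisk_antitone_of_convex
    {X : Type*} [MeasurableSpace X]
    (D : Measure (X × ℝ)) [IsProbabilityMeasure D]
    (f : X → ℝ) (l : ℝ × ℝ → ℝ)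
    (hl : ConvexOn ℝ Set.univ l)
    (k k' : ℕ) (hk : 0 < k) (hkk' : k ≤ k')
    (hint : ∀ m : ℕ, 0 < m →
      Integrable
        (fun z : Fin m → X × ℝ =>
          l ((∑ i, f (z i).1) / m, (∑ i, (z i).2) / m))
        (Measure.pi fun _ : Fin m => D)) :
    (∫ z : Fin k' → X × ℝ,
        l ((∑ i, f (z i).1) / k', (∑ i, (z i).2) / k')
        ∂(Measure.pi fun _ : Fin k' => D)) ≤
    (∫ z : Fin k → X × ℝ,
        l ((∑ i, f (z i).1) / k, (∑ i, (z i).2) / k)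
        ∂(Measure.pi fun _ : Fin k => D)) := by
  have key := batchRisk_le_of_le (μ := D) (φ := fun p => (f p.1, p.2)) hl
    (fun m hm => by simpa only [Function.comp_def, finMean_prodMk] using hint m hm) hk hkk'
  simpa only [batchRisk, Function.comp_def, finMean_prodMk] using key
end

section
/- Convex-combination decomposition of the batched empirical risk for product-form losses: let l(p) = K_1(p)·K_2(p) + b where K_1, K_2: ℝ^d → ℝ are affine and b ∈ ℝ. Then for any points p_1,...,p_n ∈ ℝ^d and 1 ≤ k ≤ n: (1/C(n,k)) ∑_{|S|=k} l((1/k)∑_{i∈S} p_i) = (1 - a) · (1/n)∑_{i=1}^n l(p_i) + a · l((1/n)∑_{i=1}^n p_i), where a = n(k-1)/(k(n-1)). -/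
open Finset

lemma affine_sum' {d : ℕ} {K : (Fin d → ℝ) → ℝ}
    (hK : ∀ (lam : ℝ) (p q : Fin d → ℝ),
      K (lam • p + (1 - lam) • q) = lam * K p + (1 - lam) * K q)
    {ι : Type*} (S : Finset ι) (p : ι → Fin d → ℝ) :
    K (∑ i ∈ S, p i) = (∑ i ∈ S, K (p i)) + (1 - (S.card : ℝ)) * K 0 := by
  have hscale : ∀ (c : ℝ) (q : Fin d → ℝ), K (c • q) = c * K q + (1 - c) * K 0 := by
    intro c q
    have := hK c q 0
    simpa using this
  have hadd : ∀ q r : Fin d → ℝ, K (q + r) = K q + K r - K 0 := by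
    intro q r
    have h3 : (2 : ℝ) • ((1/2 : ℝ) • q + (1 - (1/2 : ℝ)) • r) = q + r := by
      rw [smul_add, smul_smul, smul_smul]; norm_num
    have h1 := hscale 2 ((1/2 : ℝ) • q + (1 - (1/2 : ℝ)) • r)
    have h2 := hK (1/2 : ℝ) q r
    rw [h3] at h1
    rw [h1, h2]; norm_num; ring
  classical
  induction S using Finset.cons_induction with
  | empty => simp
  | cons a S ha ih =>
      rw [Finset.sum_cons, Finset.sum_cons, hadd, ih, Finset.card_cons]
      push_cast; ring

lemma affine_avg' {d : ℕ} {K : (Fin d → ℝ) → ℝ}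
    (hK : ∀ (lam : ℝ) (p q : Fin d → ℝ),
      K (lam • p + (1 - lam) • q) = lam * K p + (1 - lam) * K q)
    {ι : Type*} (S : Finset ι) (hS : S.Nonempty) (p : ι → Fin d → ℝ) :
    K ((S.card : ℝ)⁻¹ • ∑ i ∈ S, p i) = (S.card : ℝ)⁻¹ * ∑ i ∈ S, K (p i) := by
  have hm : (S.card : ℝ) ≠ 0 := Nat.cast_ne_zero.2 (Finset.card_pos.2 hS).ne'
  have hscale : ∀ (c : ℝ) (q : Fin d → ℝ), K (c • q) = c * K q + (1 - c) * K 0 := by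
    intro c q
    have := hK c q 0
    simpa using this
  rw [hscale, affine_sum' hK]
  field_simp
  ring

lemma count_contains {α : Type*} [DecidableEq α] (s : Finset α) (k : ℕ) (t : Finset α)
    (hts : t ⊆ s) (htk : t.card ≤ k) :
    ((Finset.powersetCard k s).filter (fun S => t ⊆ S)).card
      = (s.card - t.card).choose (k - t.card) := by
  have : (s.card - t.card).choose (k - t.card)
      = (Finset.powersetCard (k - t.card) (s \ t)).card := by
    rw [Finset.card_powersetCard, Finset.card_sdiff_of_subset hts]
  rw [this]
  apply Finset.card_bij' (fun S _ => S \ t) (fun T _ => T ∪ t)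
  · intro S hS
    simp only [Finset.mem_filter, Finset.mem_powersetCard] at hS
    obtain ⟨⟨hSs, hSk⟩, htS⟩ := hS
    simp only [Finset.mem_powersetCard]
    exact ⟨Finset.sdiff_subset_sdiff hSs (le_refl t), by rw [Finset.card_sdiff_of_subset htS, hSk]⟩
  · intro T hT
    simp only [Finset.mem_powersetCard] at hT
    obtain ⟨hTs, hTk⟩ := hT
    have hdisj : Disjoint T t := Finset.disjoint_of_subset_left hTs Finset.sdiff_disjoint
    simp only [Finset.mem_filter, Finset.mem_powersetCard]
    refine ⟨⟨Finset.union_subset (hTs.trans Finset.sdiff_subset) hts, ?_⟩,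
      Finset.subset_union_right⟩
    rw [Finset.card_union_of_disjoint hdisj, hTk, Nat.sub_add_cancel htk]
  · intro S hS
    simp only [Finset.mem_filter] at hS
    exact Finset.sdiff_union_of_subset hS.2
  · intro T hT
    simp only [Finset.mem_powersetCard] at hT
    have hdisj : Disjoint T t := Finset.disjoint_of_subset_left hT.1 Finset.sdiff_disjoint
    exact Finset.union_sdiff_cancel_right hdisj




/-- convex-combination decomposition of the batched empirical risk
for product-form losses `l(p) = K₁(p)·K₂(p) + b` with `K₁, K₂` affine. -/
theorem batched_risk_convex_combination
    (d n k : ℕ) (hn : 2 ≤ n) (hk : 1 ≤ k) (hkn : k ≤ n)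
    (K₁ K₂ : (Fin d → ℝ) → ℝ)
    (hK₁ : ∀ (lam : ℝ) (p q : Fin d → ℝ),
      K₁ (lam • p + (1 - lam) • q) = lam * K₁ p + (1 - lam) * K₁ q)
    (hK₂ : ∀ (lam : ℝ) (p q : Fin d → ℝ),
      K₂ (lam • p + (1 - lam) • q) = lam * K₂ p + (1 - lam) * K₂ q)
    (b : ℝ) (l : (Fin d → ℝ) → ℝ)
    (hl : ∀ p, l p = K₁ p * K₂ p + b)
    (p : Fin n → (Fin d → ℝ)) :
    (∑ S ∈ Finset.powersetCard k (Finset.univ : Finset (Fin n)),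
        l ((k : ℝ)⁻¹ • ∑ i ∈ S, p i)) / (n.choose k : ℝ) =
      (1 - (n : ℝ) * (k - 1) / (k * (n - 1))) * ((∑ i, l (p i)) / n) +
        (n : ℝ) * (k - 1) / (k * (n - 1)) * l ((n : ℝ)⁻¹ • ∑ i, p i) := by
  classical
  set P := Finset.powersetCard k (Finset.univ : Finset (Fin n)) with hP
  set x : Fin n → ℝ := fun i => K₁ (p i) with hx
  set y : Fin n → ℝ := fun i => K₂ (p i) with hy
  have hn0 : (n : ℝ) ≠ 0 := by positivity
  have hk0 : (k : ℝ) ≠ 0 := by positivity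
  have hn1 : (n : ℝ) - 1 ≠ 0 := by
    have : (2 : ℝ) ≤ n := by exact_mod_cast hn
    linarith
  have hC0 : (n.choose k : ℝ) ≠ 0 := Nat.cast_ne_zero.2 (Nat.choose_pos hkn).ne'
  -- cast identity for diagonal count
  have hdiagcast : (((n-1).choose (k-1) : ℕ) : ℝ) = (n.choose k : ℝ) * k / n := by
    obtain ⟨r, rfl⟩ : ∃ r, k = r + 1 := ⟨k - 1, by omega⟩
    obtain ⟨m, rfl⟩ : ∃ m, n = m + 1 := ⟨n - 1, by omega⟩
    have h := Nat.add_one_mul_choose_eq m r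
    rw [eq_div_iff hn0]
    simp only [Nat.add_sub_cancel]
    push_cast
    exact_mod_cast by linarith [congrArg (Nat.cast (R := ℝ)) h, mul_comm ((m:ℝ)+1) (m.choose r : ℝ)]
  have hcount_diag : ∀ i : Fin n,
      ((P.filter (fun S => i ∈ S)).card : ℝ) = (n.choose k : ℝ) * k / n := by
    intro i
    rw [← hdiagcast]
    congr 1
    have := count_contains (Finset.univ : Finset (Fin n)) k {i} (by simp)
      (by simpa using hk)
    simpa [Finset.singleton_subset_iff] using this
  have hcount_off : ∀ i j : Fin n, i ≠ j →
      ((P.filter (fun S => i ∈ S ∧ j ∈ S)).card : ℝ)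
        = (n.choose k : ℝ) * k * ((k:ℝ) - 1) / (n * ((n:ℝ) - 1)) := by
    intro i j hij
    by_cases hk1 : k = 1
    · subst hk1
      have hempty : P.filter (fun S => i ∈ S ∧ j ∈ S) = ∅ := by
        rw [Finset.filter_eq_empty_iff]
        intro S hS
        have hcard : S.card = 1 := (Finset.mem_powersetCard.1 hS).2
        rintro ⟨hiS, hjS⟩
        have : ({i, j} : Finset (Fin n)) ⊆ S := by
          simp [Finset.insert_subset_iff, hiS, hjS]
        have h2 := Finset.card_le_card this
        rw [Finset.card_pair hij, hcard] at h2
        omega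
      simp [hempty]
    · have h2k : 2 ≤ k := by omega
      have hc := count_contains (Finset.univ : Finset (Fin n)) k {i, j} (by simp)
        (by rw [Finset.card_pair hij]; omega)
      have hfilt : P.filter (fun S => i ∈ S ∧ j ∈ S)
          = (Finset.powersetCard k (Finset.univ : Finset (Fin n))).filter
              (fun S => ({i, j} : Finset (Fin n)) ⊆ S) := by
        rw [hP]
        apply Finset.filter_congr
        intro S _
        simp [Finset.insert_subset_iff]
      rw [hfilt, hc, Finset.card_univ, Fintype.card_fin, Finset.card_pair hij]
      -- now the cast identity for (n-2).choose (k-2)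
      obtain ⟨r, rfl⟩ : ∃ r, k = r + 2 := ⟨k - 2, by omega⟩
      obtain ⟨m, rfl⟩ : ∃ m, n = m + 2 := ⟨n - 2, by omega⟩
      have h1 := Nat.add_one_mul_choose_eq m r
      have h2 := Nat.add_one_mul_choose_eq (m+1) (r+1)
      rw [show m+1+1 = m+2 from by omega, show r+1+1 = r+2 from by omega] at h2
      have hc1 := congrArg (Nat.cast (R := ℝ)) h1
      have hc2 := congrArg (Nat.cast (R := ℝ)) h2
      push_cast at hc1 hc2
      simp only [Nat.add_sub_cancel]
      have hden : ((m:ℝ)+2) * ((m:ℝ)+2-1) ≠ 0 := by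
        have hm : (0:ℝ) ≤ (m:ℝ) := Nat.cast_nonneg m
        have : (0:ℝ) < ((m:ℝ)+2) * ((m:ℝ)+2-1) := by nlinarith
        exact this.ne'
      push_cast
      rw [eq_div_iff hden]
      linear_combination ((m:ℝ)+2) * hc1 + ((r:ℝ)+1) * hc2
  -- expanding a product of sums over a subset via indicators
  have step1 : ∀ S : Finset (Fin n), (∑ i ∈ S, x i) * (∑ i ∈ S, y i)
      = ∑ i, ∑ j, (if i ∈ S ∧ j ∈ S then x i * y j else 0) := by
    intro S
    have h1 : ∀ g : Fin n → ℝ,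
        (∑ j, (if j ∈ S then g j else 0)) = ∑ j ∈ S, g j := by
      intro g; rw [Finset.sum_ite_mem, Finset.univ_inter]
    calc (∑ i ∈ S, x i) * (∑ i ∈ S, y i)
        = ∑ i ∈ S, ∑ j ∈ S, x i * y j := Finset.sum_mul_sum _ _ _ _
      _ = ∑ i, (if i ∈ S then ∑ j ∈ S, x i * y j else 0) := (h1 _).symm
      _ = ∑ i, ∑ j, (if i ∈ S ∧ j ∈ S then x i * y j else 0) := by
          refine Finset.sum_congr rfl fun i _ => ?_
          by_cases hiS : i ∈ S
          · simp only [hiS, if_true, true_and]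
            exact (h1 _).symm
          · simp [hiS]
  -- the key combinatorial identity
  have hT : (∑ S ∈ P, (∑ i ∈ S, x i) * (∑ i ∈ S, y i))
      = ((n.choose k : ℝ) * k / n) * (∑ i, x i * y i)
        + ((n.choose k : ℝ) * k * ((k:ℝ) - 1) / (n * ((n:ℝ) - 1)))
            * ((∑ i, x i) * (∑ i, y i) - ∑ i, x i * y i) := by
    have swap : (∑ S ∈ P, (∑ i ∈ S, x i) * (∑ i ∈ S, y i))
        = ∑ i, ∑ j, ((P.filter (fun S => i ∈ S ∧ j ∈ S)).card : ℝ) * (x i * y j) := by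
      calc (∑ S ∈ P, (∑ i ∈ S, x i) * (∑ i ∈ S, y i))
          = ∑ S ∈ P, ∑ i, ∑ j, (if i ∈ S ∧ j ∈ S then x i * y j else 0) :=
            Finset.sum_congr rfl fun S _ => step1 S
        _ = ∑ i, ∑ S ∈ P, ∑ j, (if i ∈ S ∧ j ∈ S then x i * y j else 0) := Finset.sum_comm
        _ = ∑ i, ∑ j, ∑ S ∈ P, (if i ∈ S ∧ j ∈ S then x i * y j else 0) :=
            Finset.sum_congr rfl fun i _ => Finset.sum_comm
        _ = ∑ i, ∑ j, ((P.filter (fun S => i ∈ S ∧ j ∈ S)).card : ℝ) * (x i * y j) := by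
            refine Finset.sum_congr rfl fun i _ => Finset.sum_congr rfl fun j _ => ?_
            rw [Finset.sum_ite, Finset.sum_const, Finset.sum_const_zero, add_zero,
              nsmul_eq_mul]
    rw [swap]
    have hsplit : ∀ i : Fin n,
        (∑ j, ((P.filter (fun S => i ∈ S ∧ j ∈ S)).card : ℝ) * (x i * y j))
          = ((n.choose k : ℝ) * k / n) * (x i * y i)
            + ((n.choose k : ℝ) * k * ((k:ℝ) - 1) / (n * ((n:ℝ) - 1)))
                * (x i * ((∑ j, y j) - y i)) := by
      intro i
      rw [← Finset.add_sum_erase _ _ (Finset.mem_univ i)]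
      congr 1
      · have : (P.filter (fun S => i ∈ S ∧ i ∈ S)) = P.filter (fun S => i ∈ S) := by
          simp
        rw [this, hcount_diag i]
      · rw [show x i * ((∑ j, y j) - y i) = ∑ j ∈ Finset.univ.erase i, x i * y j from by
          rw [← Finset.sum_erase_eq_sub (Finset.mem_univ i), Finset.mul_sum]]
        rw [Finset.mul_sum]
        refine Finset.sum_congr rfl fun j hj => ?_
        have hij : i ≠ j := (Finset.ne_of_mem_erase hj).symm
        rw [hcount_off i j hij]
    rw [Finset.sum_congr rfl fun i _ => hsplit i, Finset.sum_add_distrib,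
      ← Finset.mul_sum, ← Finset.mul_sum]
    congr 1
    rw [show ∑ i, x i * ((∑ j, y j) - y i) = (∑ i, x i) * (∑ j, y j) - ∑ i, x i * y i from by
      simp only [mul_sub]
      rw [Finset.sum_sub_distrib, ← Finset.sum_mul]]
  -- rewrite each batch summand
  have hsummand : ∀ S ∈ P, l ((k:ℝ)⁻¹ • ∑ i ∈ S, p i)
      = (k:ℝ)⁻¹ * (k:ℝ)⁻¹ * ((∑ i ∈ S, x i) * (∑ i ∈ S, y i)) + b := by
    intro S hS
    have hSk : S.card = k := (Finset.mem_powersetCard.1 hS).2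
    have hSne : S.Nonempty := Finset.card_pos.1 (by omega)
    rw [hl]
    have h1 := affine_avg' hK₁ S hSne p
    have h2 := affine_avg' hK₂ S hSne p
    rw [hSk] at h1 h2
    rw [h1, h2]; ring
  have hPcard : P.card = n.choose k := by
    rw [hP, Finset.card_powersetCard, Finset.card_univ, Fintype.card_fin]
  have hLHS : (∑ S ∈ P, l ((k:ℝ)⁻¹ • ∑ i ∈ S, p i))
      = (k:ℝ)⁻¹ * (k:ℝ)⁻¹ * (∑ S ∈ P, (∑ i ∈ S, x i) * (∑ i ∈ S, y i))
        + (n.choose k : ℝ) * b := by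
    rw [Finset.sum_congr rfl hsummand, Finset.sum_add_distrib, ← Finset.mul_sum,
      Finset.sum_const, hPcard, nsmul_eq_mul]
  have hsum_l : (∑ i, l (p i)) = (∑ i, x i * y i) + n * b := by
    simp only [hl]
    rw [Finset.sum_add_distrib, Finset.sum_const, Finset.card_univ, Fintype.card_fin,
      nsmul_eq_mul]
  have hmean : l ((n:ℝ)⁻¹ • ∑ i, p i)
      = ((n:ℝ)⁻¹ * ∑ i, x i) * ((n:ℝ)⁻¹ * ∑ i, y i) + b := by
    have hne : (Finset.univ : Finset (Fin n)).Nonempty := ⟨⟨0, by omega⟩, Finset.mem_univ _⟩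
    have h1 := affine_avg' hK₁ Finset.univ hne p
    have h2 := affine_avg' hK₂ Finset.univ hne p
    rw [Finset.card_univ, Fintype.card_fin] at h1 h2
    rw [hl, h1, h2]
  rw [hLHS, hT, hsum_l, hmean]
  field_simp
  ring
end

section
/- Bounded difference property of the maximal batched generalization error: let l be λ-Lipschitz (with respect to the Euclidean norm on ℝ²) and suppose all f ∈ F and all labels take values in [a,b]. Define φ_k(Z) = sup_{f∈F} ( r_k(f,D) − r_k(f,Z) ), where r_k(f,Z) averages l over all k-subsets of the n-point set Z. Then for any two datasets Z, Z' differing in exactly one point, |φ_k(Z) − φ_k(Z')| ≤ √2 · λ · |a−b| / n. -/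
open MeasureTheory Finset

/-!
Replacing the `j`-th sample changes `r_k(f, Z)` only through the `C(n-1, k-1)` batches that
contain `j`, a fraction `k / n` of all batches. In each of them the batch mean of
`(f x, y)` moves by at most `|a - b| / k` in each coordinate, hence in the max metric of
`ℝ × ℝ`, so by Lipschitz continuity `|r_k(f, Z) - r_k(f, Z')| ≤ λ |a - b| / n` uniformly in
`f`. A supremum of functions moves by no more than their uniform distance.
-/

lemma abs_sub_le_of_mem_uIcc {a b x y : ℝ} (hx : x ∈ Set.uIcc a b) (hy : y ∈ Set.uIcc a b) :
    |x - y| ≤ |a - b| := by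
  rw [abs_sub_comm a b]
  exact Set.abs_sub_le_of_uIcc_subset_uIcc (Set.uIcc_subset_uIcc hy hx)

section SupremumPerturbation

variable {ι : Type*} {F : Set ι} {g h : ι → ℝ} {c : ℝ}

lemma csSup_image_le_csSup_image_add (hF : F.Nonempty) (hh : BddAbove (h '' F))
    (hgh : ∀ f ∈ F, g f ≤ h f + c) : sSup (g '' F) ≤ sSup (h '' F) + c :=
  csSup_le (hF.image g) <| Set.forall_mem_image.2 fun f hf =>
    (hgh f hf).trans (add_le_add_left (le_csSup hh (Set.mem_image_of_mem h hf)) c)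

lemma abs_csSup_image_sub_csSup_image_le (hF : F.Nonempty) (hg : BddAbove (g '' F))
    (hh : BddAbove (h '' F)) (hgh : ∀ f ∈ F, |g f - h f| ≤ c) :
    |sSup (g '' F) - sSup (h '' F)| ≤ c :=
  abs_sub_le_iff.2
    ⟨sub_le_iff_le_add'.2 <| csSup_image_le_csSup_image_add hF hh fun f hf =>
      sub_le_iff_le_add'.1 (abs_sub_le_iff.1 (hgh f hf)).1,
    sub_le_iff_le_add'.2 <| csSup_image_le_csSup_image_add hF hg fun f hf =>
      sub_le_iff_le_add'.1 (abs_sub_le_iff.1 (hgh f hf)).2⟩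

end SupremumPerturbation

section PowersetCardAverage

variable {ι : Type*} [DecidableEq ι] {s : Finset ι} {j : ι} {k : ℕ}

lemma sum_sub_sum_eq_sub_of_forall_ne {G : Type*} [AddCommGroup G] {S : Finset ι}
    (hj : j ∈ S) {p q : ι → G} (hpq : ∀ i, i ≠ j → p i = q i) :
    ∑ i ∈ S, p i - ∑ i ∈ S, q i = p j - q j := by
  rw [← add_sum_erase S p hj, ← add_sum_erase S q hj,
    sum_congr rfl fun i hi => hpq i (ne_of_mem_erase hi)]
  abel

lemma card_powersetCard_filter_mem (hj : j ∈ s) (hk : 1 ≤ k) :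
    #{S ∈ s.powersetCard k | j ∈ S} = (#s - 1).choose (k - 1) := by
  simpa [singleton_subset_iff] using
    card_filter_powersetCard_subset {j} s k (singleton_subset_iff.2 hj) (by simpa using hk)

lemma Nat.cast_choose_pred_div_choose {n : ℕ} (hk : 1 ≤ k) (hkn : k ≤ n) :
    ((n - 1).choose (k - 1) : ℝ) / n.choose k = k / n := by
  obtain ⟨k, rfl⟩ := Nat.exists_eq_add_of_le' hk
  obtain ⟨n, rfl⟩ := Nat.exists_eq_add_of_le' (hk.trans hkn)
  have hchoose : ((n + 1 : ℕ) : ℝ) * n.choose k = (n + 1).choose (k + 1) * (k + 1 : ℕ) := by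
    exact_mod_cast Nat.add_one_mul_choose_eq n k
  have hpos : (0 : ℝ) < (n + 1).choose (k + 1) := by exact_mod_cast Nat.choose_pos hkn
  rw [div_eq_div_iff hpos.ne' (by positivity)]
  simpa [mul_comm] using hchoose

lemma abs_average_powersetCard_sub_le (hj : j ∈ s) (hk : 1 ≤ k) (hks : k ≤ #s)
    {u v : Finset ι → ℝ} {c : ℝ}
    (huv : ∀ S ∈ s.powersetCard k, |u S - v S| ≤ if j ∈ S then c else 0) :
    |(∑ S ∈ s.powersetCard k, u S) / (#s).choose k -
        (∑ S ∈ s.powersetCard k, v S) / (#s).choose k| ≤ k * c / #s := by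
  rw [← sub_div, ← sum_sub_distrib, abs_div, Nat.abs_cast]
  calc |∑ S ∈ s.powersetCard k, (u S - v S)| / (#s).choose k
      ≤ (∑ S ∈ s.powersetCard k, if j ∈ S then c else 0) / (#s).choose k := by
        gcongr
        exact (abs_sum_le_sum_abs _ _).trans (sum_le_sum huv)
    _ = (#s - 1).choose (k - 1) * c / (#s).choose k := by
        rw [← sum_filter, sum_const, card_powersetCard_filter_mem hj hk, nsmul_eq_mul]
    _ = k * c / #s := by
        rw [mul_div_right_comm, Nat.cast_choose_pred_div_choose hk hks]
        ring

end PowersetCardAverage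

section BatchedEmpiricalRisk

variable {ι E : Type*} [DecidableEq ι] [NormedAddCommGroup E] [NormedSpace ℝ E]

/-- The paper's `r_k(f, Z)`, with the samples `p i = (f xᵢ, yᵢ)` indexed by `s`. -/
noncomputable def batchedEmpiricalRisk (l : E → ℝ) (k : ℕ) (s : Finset ι) (p : ι → E) :
    ℝ :=
  (∑ S ∈ s.powersetCard k, l ((k : ℝ)⁻¹ • ∑ i ∈ S, p i)) / (#s).choose k

lemma abs_batchedEmpiricalRisk_sub_le {l : E → ℝ} {lam : ℝ}
    (hlip : ∀ x y, |l x - l y| ≤ lam * dist x y) {s : Finset ι} {j : ι} (hj : j ∈ s)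
    {k : ℕ} (hk : 1 ≤ k) (hks : k ≤ #s) {p q : ι → E}
    (hpq : ∀ i, i ≠ j → p i = q i) :
    |batchedEmpiricalRisk l k s p - batchedEmpiricalRisk l k s q| ≤
      lam * ‖p j - q j‖ / #s := by
  have hk0 : (0 : ℝ) < k := by exact_mod_cast hk
  refine (abs_average_powersetCard_sub_le hj hk hks (c := lam * (‖p j - q j‖ / k))
    fun S _ => ?_).trans_eq (by field_simp)
  split_ifs with hjS
  · refine (hlip _ _).trans_eq ?_
    rw [dist_eq_norm, ← smul_sub, sum_sub_sum_eq_sub_of_forall_ne hjS hpq, norm_smul,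
      norm_inv, Real.norm_natCast, inv_mul_eq_div]
  · rw [sum_congr rfl fun i hi => hpq i (ne_of_mem_of_not_mem hi hjS), sub_self, abs_zero]

end BatchedEmpiricalRisk

theorem batched_generalization_bounded_difference_general
    {X : Type*}
    (F : Set (X → ℝ)) (hF : F.Nonempty)
    (a b : ℝ)
    (hFab : ∀ f ∈ F, ∀ x, f x ∈ Set.Icc (min a b) (max a b))
    (l : ℝ × ℝ → ℝ) (lam : ℝ) (hlam : 0 ≤ lam)
    (hlip : ∀ p q : ℝ × ℝ, |l p - l q| ≤ lam * dist p q)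
    (n k : ℕ) (hk : 1 ≤ k) (hkn : k ≤ n)
    (riskD : (X → ℝ) → ℝ)
    (riskEmp : (X → ℝ) → (Fin n → X × ℝ) → ℝ)
    (hriskEmp : ∀ f Z, riskEmp f Z =
      (∑ S ∈ Finset.powersetCard k (Finset.univ : Finset (Fin n)),
          l ((∑ i ∈ S, f (Z i).1) / k, (∑ i ∈ S, (Z i).2) / k)) /
        (n.choose k : ℝ))
    (φ : (Fin n → X × ℝ) → ℝ)
    (hφ : ∀ Z, φ Z = sSup {r : ℝ | ∃ f ∈ F, r = riskD f - riskEmp f Z})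
    (hbdd : ∀ Z : Fin n → X × ℝ,
      BddAbove {r : ℝ | ∃ f ∈ F, r = riskD f - riskEmp f Z})
    (Z Z' : Fin n → X × ℝ)
    (hlabels : ∀ i, (Z i).2 ∈ Set.Icc (min a b) (max a b) ∧
      (Z' i).2 ∈ Set.Icc (min a b) (max a b))
    (j : Fin n) (hdiff : ∀ i, i ≠ j → Z i = Z' i) :
    |φ Z - φ Z'| ≤ Real.sqrt 2 * lam * |a - b| / n := by
  have hrisk : ∀ f W, riskEmp f W =
      batchedEmpiricalRisk l k univ fun i => (f (W i).1, (W i).2) := by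
    intro f W
    simp [hriskEmp, batchedEmpiricalRisk, ← prod_mk_sum, div_eq_inv_mul]
  have himage : ∀ W, {r : ℝ | ∃ f ∈ F, r = riskD f - riskEmp f W} =
      (fun f => riskD f - riskEmp f W) '' F := fun W => by
    ext; simp [eq_comm]
  have hpoint : ∀ f ∈ F, |riskEmp f Z' - riskEmp f Z| ≤ lam * |a - b| / n := by
    intro f hf
    have hjump : ‖((f (Z' j).1, (Z' j).2) : ℝ × ℝ) - (f (Z j).1, (Z j).2)‖ ≤ |a - b| :=
      max_le (abs_sub_le_of_mem_uIcc (hFab f hf _) (hFab f hf _))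
        (abs_sub_le_of_mem_uIcc (hlabels j).2 (hlabels j).1)
    rw [hrisk, hrisk]
    refine (abs_batchedEmpiricalRisk_sub_le hlip (mem_univ j) hk (by simpa using hkn)
      fun i hi => by rw [hdiff i hi]).trans ?_
    rw [card_univ, Fintype.card_fin]
    gcongr
  rw [hφ, hφ, himage, himage]
  calc _ ≤ lam * |a - b| / n := abs_csSup_image_sub_csSup_image_le hF (himage Z ▸ hbdd Z)
        (himage Z' ▸ hbdd Z') fun f hf => by rw [sub_sub_sub_cancel_left]; exact hpoint f hf
    _ ≤ Real.sqrt 2 * lam * |a - b| / n := by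
        gcongr
        exact le_mul_of_one_le_left hlam (Real.one_le_sqrt.2 one_le_two)

/-- bounded difference property of the maximal batched
generalization error `φ_k(Z) = sup_{f∈F} (r_k(f,D) − r_k(f,Z))` : if the loss is
`λ`-Lipschitz on `ℝ²` and all hypotheses and labels take values in `[a,b]`, then
two datasets differing in a single point satisfy
`|φ_k(Z) − φ_k(Z')| ≤ √2 · λ · |a−b| / n`. -/
theorem batched_generalization_bounded_difference
    {X : Type*} [MeasurableSpace X]
    (D : Measure (X × ℝ)) [IsProbabilityMeasure D]
    (F : Set (X → ℝ)) (hF : F.Nonempty)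
    (a b : ℝ)
    (hFab : ∀ f ∈ F, ∀ x, f x ∈ Set.Icc (min a b) (max a b))
    (l : ℝ × ℝ → ℝ) (lam : ℝ) (hlam : 0 ≤ lam)
    (hlip : ∀ p q : ℝ × ℝ, |l p - l q| ≤ lam * dist p q)
    (n k : ℕ) (hk : 1 ≤ k) (hkn : k ≤ n)
    (riskD : (X → ℝ) → ℝ)
    (hriskD : ∀ f ∈ F, riskD f =
      ∫ w : Fin k → X × ℝ,
        l ((∑ i, f (w i).1) / k, (∑ i, (w i).2) / k)
        ∂(Measure.pi fun _ : Fin k => D))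
    (riskEmp : (X → ℝ) → (Fin n → X × ℝ) → ℝ)
    (hriskEmp : ∀ f Z, riskEmp f Z =
      (∑ S ∈ Finset.powersetCard k (Finset.univ : Finset (Fin n)),
          l ((∑ i ∈ S, f (Z i).1) / k, (∑ i ∈ S, (Z i).2) / k)) /
        (n.choose k : ℝ))
    (φ : (Fin n → X × ℝ) → ℝ)
    (hφ : ∀ Z, φ Z = sSup {r : ℝ | ∃ f ∈ F, r = riskD f - riskEmp f Z})
    (hbdd : ∀ Z : Fin n → X × ℝ,
      BddAbove {r : ℝ | ∃ f ∈ F, r = riskD f - riskEmp f Z})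
    (Z Z' : Fin n → X × ℝ)
    (hlabels : ∀ i, (Z i).2 ∈ Set.Icc (min a b) (max a b) ∧
      (Z' i).2 ∈ Set.Icc (min a b) (max a b))
    (j : Fin n) (hdiff : ∀ i, i ≠ j → Z i = Z' i) :
    |φ Z - φ Z'| ≤ Real.sqrt 2 * lam * |a - b| / n :=
  batched_generalization_bounded_difference_general F hF a b hFab l lam hlam hlip n k hk hkn riskD
    riskEmp hriskEmp φ hφ hbdd Z Z' hlabels j hdiff
end

section
/- Contraction of the k-Rademacher complexity through the squared loss for [0,1]-valued functions: if every f ∈ F takes values in [0,1] and all labels y_i ∈ [0,1], then E_σ[ sup_{f∈F} (1/m) ∑_{S} σ_S (mean_S f − mean_S y)² ] ≤ 2 · E_σ[ sup_{f∈F} (1/m) ∑_S σ_S · mean_S f ], where the sum runs over all m = C(n,k) subsets S of size k and σ_S are i.i.d. Rademacher variables. -/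
open Finset Set

namespace KRadAux

noncomputable def rsign (b : Bool) : ℝ := if b then 1 else -1
lemma abs_rsign (b : Bool) : |rsign b| = 1 := by cases b <;> simp [rsign]
lemma rsign_not (b : Bool) : rsign (!b) = -rsign b := by cases b <;> simp [rsign]

lemma bdd_of_le {α : Type*} (g : α → ℝ) (M : ℝ) (h : ∀ f, g f ≤ M) :
    BddAbove (Set.range g) := ⟨M, by rintro r ⟨f, rfl⟩; exact h f⟩

lemma abs_sum_sign_le {ι α : Type*} (σ : ι → Bool) (B : ι → α → ℝ) (C : ℝ)
    (hB : ∀ i f, |B i f| ≤ C) (s : Finset ι) (f : α) :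
    |∑ i ∈ s, rsign (σ i) * B i f| ≤ s.card * C := by
  calc |∑ i ∈ s, rsign (σ i) * B i f| ≤ ∑ i ∈ s, |rsign (σ i) * B i f| :=
        Finset.abs_sum_le_sum_abs _ _
    _ ≤ ∑ _i ∈ s, C := by
        refine Finset.sum_le_sum fun i _ => ?_
        rw [abs_mul, abs_rsign, one_mul]; exact hB i f
    _ = s.card * C := by simp [mul_comm]

lemma sup_step {α : Type*} [Nonempty α] (p q T : α → ℝ)
    (hb1 : BddAbove (Set.range fun f => q f + T f))
    (hb2 : BddAbove (Set.range fun f => -q f + T f))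
    (h : ∀ f g, |p f - p g| ≤ |q f - q g|) :
    sSup (Set.range fun f => p f + T f) + sSup (Set.range fun f => -p f + T f)
      ≤ sSup (Set.range fun f => q f + T f) + sSup (Set.range fun f => -q f + T f) := by
  set c := sSup (Set.range fun f => q f + T f) + sSup (Set.range fun f => -q f + T f) with hc
  have key : ∀ f g : α, (p f + T f) + (-p g + T g) ≤ c := by
    intro f g
    have h1 : q f + T f ≤ sSup (Set.range fun f => q f + T f) := le_csSup hb1 ⟨f, rfl⟩
    have h2 : -q g + T g ≤ sSup (Set.range fun f => -q f + T f) := le_csSup hb2 ⟨g, rfl⟩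
    have h3 : q g + T g ≤ sSup (Set.range fun f => q f + T f) := le_csSup hb1 ⟨g, rfl⟩
    have h4 : -q f + T f ≤ sSup (Set.range fun f => -q f + T f) := le_csSup hb2 ⟨f, rfl⟩
    have h5 : p f - p g ≤ |q f - q g| := le_trans (le_abs_self _) (h f g)
    rcases abs_cases (q f - q g) with ⟨he, _⟩ | ⟨he, _⟩ <;> rw [he] at h5 <;> linarith
  have step1 : sSup (Set.range fun f => p f + T f)
      ≤ c - sSup (Set.range fun f => -p f + T f) := by
    refine csSup_le (Set.range_nonempty _) ?_
    rintro r ⟨f, rfl⟩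
    rw [le_sub_iff_add_le, add_comm, ← le_sub_iff_add_le]
    refine csSup_le (Set.range_nonempty _) ?_
    rintro r ⟨g, rfl⟩
    rw [le_sub_iff_add_le, add_comm]
    exact key f g
  linarith

lemma core {ι α : Type*} [Fintype ι] [DecidableEq ι] [Nonempty α]
    (A P : ι → α → ℝ) (C : ℝ)
    (hbA : ∀ i f, |A i f| ≤ C) (hbP : ∀ i f, |P i f| ≤ C)
    (𝒯 : Finset ι) :
    ∀ 𝒰 : Finset ι, Disjoint 𝒯 𝒰 →
      (∀ i ∈ 𝒯, ∀ f g, |P i f - P i g| ≤ |A i f - A i g|) →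
      ∑ σ : ι → Bool, sSup (Set.range fun f =>
          ∑ i ∈ 𝒯, rsign (σ i) * P i f + ∑ i ∈ 𝒰, rsign (σ i) * A i f)
        ≤ ∑ σ : ι → Bool, sSup (Set.range fun f =>
            ∑ i ∈ 𝒯 ∪ 𝒰, rsign (σ i) * A i f) := by
  induction 𝒯 using Finset.induction_on with
  | empty => intro 𝒰 _ _; simp
  | @insert j 𝒯' hj ih =>
    intro 𝒰 hdisj hLip
    have hj𝒰 : j ∉ 𝒰 := (Finset.disjoint_insert_left.1 hdisj).1
    have hjU : j ∉ 𝒯' := hj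
    -- the flip involution
    set flip : (ι → Bool) → (ι → Bool) := fun σ => Function.update σ j (!σ j) with hflipdef
    have hflip_j : ∀ σ, flip σ j = !σ j := fun σ => Function.update_self _ _ _
    have hflip_ne : ∀ σ i, i ≠ j → flip σ i = σ i := fun σ i hi =>
      Function.update_of_ne hi _ _
    have hinv : Function.Involutive flip := by
      intro σ; funext i
      by_cases h : i = j
      · subst h; simp [hflipdef, Function.update_self]
      · simp [hflipdef, Function.update_of_ne h]
    -- G and H
    set G : (ι → Bool) → ℝ := fun σ => sSup (Set.range fun f =>
        ∑ i ∈ insert j 𝒯', rsign (σ i) * P i f + ∑ i ∈ 𝒰, rsign (σ i) * A i f) with hG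
    set H : (ι → Bool) → ℝ := fun σ => sSup (Set.range fun f =>
        ∑ i ∈ 𝒯', rsign (σ i) * P i f + ∑ i ∈ insert j 𝒰, rsign (σ i) * A i f) with hH
    have key : ∀ σ, G σ + G (flip σ) ≤ H σ + H (flip σ) := by
      intro σ
      set T : α → ℝ := fun f =>
        ∑ i ∈ 𝒯', rsign (σ i) * P i f + ∑ i ∈ 𝒰, rsign (σ i) * A i f with hT
      have hsump : ∀ i ∈ 𝒯', rsign (flip σ i) = rsign (σ i) := fun i hi => by
        rw [hflip_ne σ i (ne_of_mem_of_not_mem hi hjU)]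
      have hsuma : ∀ i ∈ 𝒰, rsign (flip σ i) = rsign (σ i) := fun i hi => by
        rw [hflip_ne σ i (ne_of_mem_of_not_mem hi hj𝒰)]
      have f1 : (fun f : α => ∑ i ∈ insert j 𝒯', rsign (σ i) * P i f
          + ∑ i ∈ 𝒰, rsign (σ i) * A i f)
          = fun f => rsign (σ j) * P j f + T f := by
        funext f
        rw [Finset.sum_insert hjU]
        simp only [hT]; ring
      have f2 : (fun f : α => ∑ i ∈ insert j 𝒯', rsign (flip σ i) * P i f
          + ∑ i ∈ 𝒰, rsign (flip σ i) * A i f)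
          = fun f => -(rsign (σ j) * P j f) + T f := by
        funext f
        have hp : ∑ i ∈ 𝒯', rsign (flip σ i) * P i f = ∑ i ∈ 𝒯', rsign (σ i) * P i f :=
          Finset.sum_congr rfl fun i hi => by rw [hsump i hi]
        have ha : ∑ i ∈ 𝒰, rsign (flip σ i) * A i f = ∑ i ∈ 𝒰, rsign (σ i) * A i f :=
          Finset.sum_congr rfl fun i hi => by rw [hsuma i hi]
        rw [Finset.sum_insert hjU, hflip_j, rsign_not, hp, ha]
        simp only [hT]; ring
      have f3 : (fun f : α => ∑ i ∈ 𝒯', rsign (σ i) * P i f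
          + ∑ i ∈ insert j 𝒰, rsign (σ i) * A i f)
          = fun f => rsign (σ j) * A j f + T f := by
        funext f
        rw [Finset.sum_insert hj𝒰]
        simp only [hT]; ring
      have f4 : (fun f : α => ∑ i ∈ 𝒯', rsign (flip σ i) * P i f
          + ∑ i ∈ insert j 𝒰, rsign (flip σ i) * A i f)
          = fun f => -(rsign (σ j) * A j f) + T f := by
        funext f
        have hp : ∑ i ∈ 𝒯', rsign (flip σ i) * P i f = ∑ i ∈ 𝒯', rsign (σ i) * P i f :=
          Finset.sum_congr rfl fun i hi => by rw [hsump i hi]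
        have ha : ∑ i ∈ 𝒰, rsign (flip σ i) * A i f = ∑ i ∈ 𝒰, rsign (σ i) * A i f :=
          Finset.sum_congr rfl fun i hi => by rw [hsuma i hi]
        rw [Finset.sum_insert hj𝒰, hflip_j, rsign_not, hp, ha]
        simp only [hT]; ring
      have e1 : G σ = sSup (Set.range fun f => rsign (σ j) * P j f + T f) := by
        rw [hG]; exact congrArg sSup (congrArg Set.range f1)
      have e2 : G (flip σ) = sSup (Set.range fun f => -(rsign (σ j) * P j f) + T f) := by
        rw [hG]; exact congrArg sSup (congrArg Set.range f2)
      have e3 : H σ = sSup (Set.range fun f => rsign (σ j) * A j f + T f) := by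
        rw [hH]; exact congrArg sSup (congrArg Set.range f3)
      have e4 : H (flip σ) = sSup (Set.range fun f => -(rsign (σ j) * A j f) + T f) := by
        rw [hH]; exact congrArg sSup (congrArg Set.range f4)
      rw [e1, e2, e3, e4]
      have hTbound : ∀ f, T f ≤ (𝒯'.card : ℝ) * C + (𝒰.card : ℝ) * C := by
        intro f
        have h1 := (abs_le.1 (abs_sum_sign_le σ P C hbP 𝒯' f)).2
        have h2 := (abs_le.1 (abs_sum_sign_le σ A C hbA 𝒰 f)).2
        rw [hT]; exact add_le_add h1 h2
      have hb1 : BddAbove (Set.range fun f => rsign (σ j) * A j f + T f) := by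
        refine bdd_of_le _ (C + ((𝒯'.card : ℝ) * C + (𝒰.card : ℝ) * C)) fun f => ?_
        have := (abs_le.1 (by rw [abs_mul, abs_rsign, one_mul]; exact hbA j f :
          |rsign (σ j) * A j f| ≤ C)).2
        exact add_le_add this (hTbound f)
      have hb2 : BddAbove (Set.range fun f => -(rsign (σ j) * A j f) + T f) := by
        refine bdd_of_le _ (C + ((𝒯'.card : ℝ) * C + (𝒰.card : ℝ) * C)) fun f => ?_
        have habs : |rsign (σ j) * A j f| ≤ C := by
          rw [abs_mul, abs_rsign, one_mul]; exact hbA j f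
        have := (abs_le.1 habs).1
        have h2 := hTbound f
        linarith
      refine sup_step _ _ _ hb1 hb2 fun f g => ?_
      rw [← mul_sub, ← mul_sub, abs_mul, abs_mul, abs_rsign, one_mul, one_mul]
      exact hLip j (Finset.mem_insert_self j 𝒯') f g
    -- sum the pairing
    have hperm : ∀ (W : (ι → Bool) → ℝ), ∑ σ : ι → Bool, W (flip σ) = ∑ σ : ι → Bool, W σ :=
      fun W => Equiv.sum_comp (hinv.toPerm flip) W
    have hstep : ∑ σ : ι → Bool, G σ ≤ ∑ σ : ι → Bool, H σ := by
      have h2 : ∑ σ : ι → Bool, (G σ + G (flip σ)) ≤ ∑ σ : ι → Bool, (H σ + H (flip σ)) :=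
        Finset.sum_le_sum fun σ _ => key σ
      rw [Finset.sum_add_distrib, Finset.sum_add_distrib, hperm G, hperm H] at h2
      linarith
    have hdisj' : Disjoint 𝒯' (insert j 𝒰) :=
      Finset.disjoint_insert_right.2 ⟨hjU, (Finset.disjoint_insert_left.1 hdisj).2⟩
    have final := ih (insert j 𝒰) hdisj' fun i hi => hLip i (Finset.mem_insert_of_mem hi)
    have hu : 𝒯' ∪ insert j 𝒰 = insert j 𝒯' ∪ 𝒰 := by
      ext i; simp [or_comm, or_left_comm, or_assoc]
    rw [hu] at final
    exact le_trans hstep final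


lemma sSup_two_mul {α : Type*} [Nonempty α] (g : α → ℝ) (M : ℝ) (hb : ∀ f, |g f| ≤ M) :
    sSup (Set.range fun f => 2 * g f) = 2 * sSup (Set.range g) := by
  have hbg : BddAbove (Set.range g) := ⟨M, by rintro r ⟨f, rfl⟩; exact (abs_le.1 (hb f)).2⟩
  have hbg2 : BddAbove (Set.range fun f => 2 * g f) := by
    refine ⟨2 * M, ?_⟩
    rintro r ⟨f, rfl⟩
    show 2 * g f ≤ 2 * M
    have := (abs_le.1 (hb f)).2; linarith
  apply le_antisymm
  · refine csSup_le (Set.range_nonempty _) ?_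
    rintro r ⟨f, rfl⟩
    show 2 * g f ≤ 2 * sSup (Set.range g)
    have : g f ≤ sSup (Set.range g) := le_csSup hbg ⟨f, rfl⟩
    linarith
  · rw [show (2:ℝ) * sSup (Set.range g) = sSup (Set.range g) * 2 by ring,
      ← le_div_iff₀ (by norm_num : (0:ℝ) < 2)]
    refine csSup_le (Set.range_nonempty _) ?_
    rintro r ⟨f, rfl⟩
    rw [le_div_iff₀ (by norm_num : (0:ℝ) < 2), mul_comm]
    exact le_csSup hbg2 ⟨f, rfl⟩

end KRadAux

open KRadAux



/-- contraction of the `k`-Rademacher complexity through the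
squared loss for `[0,1]`-valued hypotheses and labels:
`E_σ[sup_F (1/m) ∑_S σ_S (mean_S f − mean_S y)²] ≤ 2 E_σ[sup_F (1/m) ∑_S σ_S mean_S f]`,
the expectation being the uniform average over all sign assignments `σ` to the
`k`-subsets `S` of `{1,…,n}`, with `m = C(n,k)`. -/
theorem krademacher_contraction_squared_loss
    {X : Type*} (n k : ℕ) (hk : 1 ≤ k) (hkn : k ≤ n)
    (x : Fin n → X) (y : Fin n → ℝ) (hy : ∀ i, y i ∈ Set.Icc (0 : ℝ) 1)
    (F : Set (X → ℝ)) (hF : F.Nonempty)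
    (hF01 : ∀ f ∈ F, ∀ t, f t ∈ Set.Icc (0 : ℝ) 1) :
    (∑ σ : Finset (Fin n) → Bool,
        sSup {r : ℝ | ∃ f ∈ F, r =
          (∑ S ∈ Finset.powersetCard k (Finset.univ : Finset (Fin n)),
              (if σ S then (1 : ℝ) else -1) *
                ((∑ i ∈ S, f (x i)) / k - (∑ i ∈ S, y i) / k) ^ 2) /
            (n.choose k : ℝ)}) /
      (Fintype.card (Finset (Fin n) → Bool) : ℝ) ≤
    2 * ((∑ σ : Finset (Fin n) → Bool,
        sSup {r : ℝ | ∃ f ∈ F, r =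
          (∑ S ∈ Finset.powersetCard k (Finset.univ : Finset (Fin n)),
              (if σ S then (1 : ℝ) else -1) * ((∑ i ∈ S, f (x i)) / k)) /
            (n.choose k : ℝ)}) /
      (Fintype.card (Finset (Fin n) → Bool) : ℝ)) := by
  classical
  haveI : Nonempty F := hF.to_subtype
  set ι := Finset (Fin n)
  set α := {f : X → ℝ // f ∈ F}
  haveI : Nonempty α := hF.to_subtype
  have hk0 : (0 : ℝ) < k := by exact_mod_cast hk
  have hm0 : (0 : ℝ) < (n.choose k : ℝ) := by exact_mod_cast Nat.choose_pos hkn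
  set m : ℝ := (n.choose k : ℝ) with hm
  set D : ℝ := (n : ℝ) / k with hD
  have hD0 : 0 ≤ D := div_nonneg (Nat.cast_nonneg n) hk0.le
  set af : ι → α → ℝ := fun S f => (∑ i ∈ S, (f : X → ℝ) (x i)) / k with haf
  set cy : ι → ℝ := fun S => (∑ i ∈ S, y i) / k with hcy
  set P : ι → α → ℝ := fun S f => (af S f - cy S) ^ 2 / m with hP
  set A : ι → α → ℝ := fun S f => 2 * (af S f / m) with hA
  set B : ι → α → ℝ := fun S f => af S f / m with hB
  -- basic bounds
  have hafb : ∀ (S : ι) (f : α), 0 ≤ af S f ∧ af S f ≤ (S.card : ℝ) / k := by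
    intro S f
    constructor
    · exact div_nonneg (Finset.sum_nonneg fun i _ => (hF01 f.1 f.2 (x i)).1) hk0.le
    · have hnum : ∑ i ∈ S, (f : X → ℝ) (x i) ≤ (S.card : ℝ) := by
        calc ∑ i ∈ S, (f : X → ℝ) (x i) ≤ ∑ _i ∈ S, (1 : ℝ) :=
              Finset.sum_le_sum fun i _ => (hF01 f.1 f.2 (x i)).2
          _ = (S.card : ℝ) := by simp
      show (∑ i ∈ S, (f : X → ℝ) (x i)) / (k : ℝ) ≤ (S.card : ℝ) / k
      gcongr
  have hcyb : ∀ S : ι, 0 ≤ cy S ∧ cy S ≤ (S.card : ℝ) / k := by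
    intro S
    constructor
    · exact div_nonneg (Finset.sum_nonneg fun i _ => (hy i).1) hk0.le
    · have hnum : ∑ i ∈ S, y i ≤ (S.card : ℝ) := by
        calc ∑ i ∈ S, y i ≤ ∑ _i ∈ S, (1 : ℝ) := Finset.sum_le_sum fun i _ => (hy i).2
          _ = (S.card : ℝ) := by simp
      show (∑ i ∈ S, y i) / (k : ℝ) ≤ (S.card : ℝ) / k
      gcongr
  have hcardD : ∀ S : ι, (S.card : ℝ) / k ≤ D := by
    intro S
    rw [hD]
    have : (S.card : ℝ) ≤ (n : ℝ) := by
      exact_mod_cast (Finset.card_le_univ S).trans_eq (by simp)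
    gcongr
  have hafD : ∀ (S : ι) (f : α), 0 ≤ af S f ∧ af S f ≤ D :=
    fun S f => ⟨(hafb S f).1, (hafb S f).2.trans (hcardD S)⟩
  have hcyD : ∀ S : ι, 0 ≤ cy S ∧ cy S ≤ D := fun S => ⟨(hcyb S).1, (hcyb S).2.trans (hcardD S)⟩
  set C : ℝ := (D ^ 2 + 2 * D) / m with hC
  have hbP : ∀ (S : ι) (f : α), |P S f| ≤ C := by
    intro S f
    have h1 := hafD S f; have h2 := hcyD S
    have habs : |af S f - cy S| ≤ D := abs_le.2 ⟨by linarith, by linarith⟩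
    have hsq : (af S f - cy S) ^ 2 ≤ D ^ 2 := by
      rw [← sq_abs]; exact pow_le_pow_left₀ (abs_nonneg _) habs 2
    show |(af S f - cy S) ^ 2 / m| ≤ (D ^ 2 + 2 * D) / m
    rw [abs_of_nonneg (div_nonneg (sq_nonneg _) hm0.le)]
    gcongr
    nlinarith [hD0]
  have hbA : ∀ (S : ι) (f : α), |A S f| ≤ C := by
    intro S f
    have h1 := hafD S f
    show |2 * (af S f / m)| ≤ (D ^ 2 + 2 * D) / m
    rw [abs_of_nonneg (mul_nonneg (by norm_num) (div_nonneg h1.1 hm0.le))]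
    have he : 2 * (af S f / m) = (2 * af S f) / m := by ring
    rw [he]
    gcongr
    nlinarith [hD0]
  have hbB : ∀ (S : ι) (f : α), |B S f| ≤ D / m := by
    intro S f
    have h1 := hafD S f
    show |af S f / m| ≤ D / m
    rw [abs_of_nonneg (div_nonneg h1.1 hm0.le)]
    gcongr
    exact h1.2
  -- Lipschitz property on k-subsets
  set 𝒯 : Finset ι := Finset.powersetCard k (Finset.univ : Finset (Fin n)) with h𝒯
  have hLip : ∀ S ∈ 𝒯, ∀ f g : α, |P S f - P S g| ≤ |A S f - A S g| := by
    intro S hS f g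
    have hcardS : S.card = k := (Finset.mem_powersetCard.1 hS).2
    have hone : (S.card : ℝ) / k = 1 := by rw [hcardS]; field_simp
    have ha : 0 ≤ af S f ∧ af S f ≤ 1 := by have := hafb S f; rw [hone] at this; exact this
    have hb : 0 ≤ af S g ∧ af S g ≤ 1 := by have := hafb S g; rw [hone] at this; exact this
    have hc : 0 ≤ cy S ∧ cy S ≤ 1 := by have := hcyb S; rw [hone] at this; exact this
    have e1 : (af S f - cy S) ^ 2 / m - (af S g - cy S) ^ 2 / m
        = ((af S f - af S g) * (af S f + af S g - 2 * cy S)) / m := by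
      ring
    have e2 : 2 * (af S f / m) - 2 * (af S g / m) = (2 * (af S f - af S g)) / m := by
      ring
    show |(af S f - cy S) ^ 2 / m - (af S g - cy S) ^ 2 / m|
      ≤ |2 * (af S f / m) - 2 * (af S g / m)|
    rw [e1, e2, abs_div, abs_div, abs_of_pos hm0, div_le_div_iff_of_pos_right hm0]
    rw [abs_mul, abs_mul]
    have h2 : |af S f + af S g - 2 * cy S| ≤ 2 :=
      abs_le.2 ⟨by linarith [ha.1, hb.1, hc.2], by linarith [ha.2, hb.2, hc.1]⟩
    calc |af S f - af S g| * |af S f + af S g - 2 * cy S|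
        ≤ |af S f - af S g| * 2 := by
          exact mul_le_mul_of_nonneg_left h2 (abs_nonneg _)
      _ = |(2:ℝ)| * |af S f - af S g| := by rw [abs_two]; ring
  -- apply the core contraction
  have hcore := core A P C hbA hbP 𝒯 ∅ (Finset.disjoint_empty_right _) hLip
  rw [Finset.union_empty] at hcore
  have hcore' : ∑ σ : ι → Bool, sSup (Set.range fun f : α => ∑ S ∈ 𝒯, rsign (σ S) * P S f)
      ≤ ∑ σ : ι → Bool, sSup (Set.range fun f : α => ∑ S ∈ 𝒯, rsign (σ S) * A S f) := by
    refine le_trans (le_of_eq ?_) hcore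
    refine Finset.sum_congr rfl fun σ _ => ?_
    exact congrArg sSup (congrArg Set.range (by funext f; simp))
  -- identify LHS sets
  have hLset : ∀ σ : ι → Bool,
      {r : ℝ | ∃ f ∈ F, r =
        (∑ S ∈ 𝒯, (if σ S then (1 : ℝ) else -1) *
          ((∑ i ∈ S, f (x i)) / k - (∑ i ∈ S, y i) / k) ^ 2) / m}
      = Set.range fun f : α => ∑ S ∈ 𝒯, rsign (σ S) * P S f := by
    intro σ
    ext r
    simp only [Set.mem_setOf_eq, Set.mem_range]
    constructor
    · rintro ⟨f, hf, rfl⟩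
      refine ⟨⟨f, hf⟩, ?_⟩
      rw [Finset.sum_div]
      refine Finset.sum_congr rfl fun S _ => ?_
      rw [hP, haf, hcy, rsign, mul_div_assoc]
    · rintro ⟨f, rfl⟩
      refine ⟨f.1, f.2, ?_⟩
      rw [Finset.sum_div]
      refine Finset.sum_congr rfl fun S _ => ?_
      rw [hP, haf, hcy, rsign, mul_div_assoc]
  -- identify RHS sets
  have hRset : ∀ σ : ι → Bool,
      {r : ℝ | ∃ f ∈ F, r =
        (∑ S ∈ 𝒯, (if σ S then (1 : ℝ) else -1) * ((∑ i ∈ S, f (x i)) / k)) / m}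
      = Set.range fun f : α => ∑ S ∈ 𝒯, rsign (σ S) * B S f := by
    intro σ
    ext r
    simp only [Set.mem_setOf_eq, Set.mem_range]
    constructor
    · rintro ⟨f, hf, rfl⟩
      refine ⟨⟨f, hf⟩, ?_⟩
      rw [Finset.sum_div]
      refine Finset.sum_congr rfl fun S _ => ?_
      rw [hB, haf, rsign, mul_div_assoc]
    · rintro ⟨f, rfl⟩
      refine ⟨f.1, f.2, ?_⟩
      rw [Finset.sum_div]
      refine Finset.sum_congr rfl fun S _ => ?_
      rw [hB, haf, rsign, mul_div_assoc]
  -- A-sup equals twice B-sup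
  have hAB : ∀ σ : ι → Bool,
      sSup (Set.range fun f : α => ∑ S ∈ 𝒯, rsign (σ S) * A S f)
        = 2 * sSup (Set.range fun f : α => ∑ S ∈ 𝒯, rsign (σ S) * B S f) := by
    intro σ
    have heq : (fun f : α => ∑ S ∈ 𝒯, rsign (σ S) * A S f)
        = fun f => 2 * ∑ S ∈ 𝒯, rsign (σ S) * B S f := by
      funext f
      rw [Finset.mul_sum]
      refine Finset.sum_congr rfl fun S _ => ?_
      rw [hA, hB]; ring
    rw [heq]
    exact sSup_two_mul _ ((𝒯.card : ℝ) * (D / m)) fun f => abs_sum_sign_le σ B (D / m) hbB 𝒯 f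
  -- finish
  calc (∑ σ : ι → Bool, sSup {r : ℝ | ∃ f ∈ F, r =
          (∑ S ∈ 𝒯, (if σ S then (1 : ℝ) else -1) *
            ((∑ i ∈ S, f (x i)) / k - (∑ i ∈ S, y i) / k) ^ 2) / m}) /
        (Fintype.card (ι → Bool) : ℝ)
      = (∑ σ : ι → Bool, sSup (Set.range fun f : α => ∑ S ∈ 𝒯, rsign (σ S) * P S f)) /
        (Fintype.card (ι → Bool) : ℝ) := by
        rw [Finset.sum_congr rfl fun σ _ => congrArg sSup (hLset σ)]
    _ ≤ (∑ σ : ι → Bool, sSup (Set.range fun f : α => ∑ S ∈ 𝒯, rsign (σ S) * A S f)) /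
        (Fintype.card (ι → Bool) : ℝ) := by gcongr
    _ = (∑ σ : ι → Bool, 2 * sSup (Set.range fun f : α => ∑ S ∈ 𝒯, rsign (σ S) * B S f)) /
        (Fintype.card (ι → Bool) : ℝ) := by
        rw [Finset.sum_congr rfl fun σ _ => hAB σ]
    _ = 2 * ((∑ σ : ι → Bool, sSup (Set.range fun f : α => ∑ S ∈ 𝒯, rsign (σ S) * B S f)) /
        (Fintype.card (ι → Bool) : ℝ)) := by
        rw [← Finset.mul_sum, mul_div_assoc]
    _ = 2 * ((∑ σ : ι → Bool, sSup {r : ℝ | ∃ f ∈ F, r =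
          (∑ S ∈ 𝒯, (if σ S then (1 : ℝ) else -1) * ((∑ i ∈ S, f (x i)) / k)) / m}) /
        (Fintype.card (ι → Bool) : ℝ)) := by
        rw [Finset.sum_congr rfl fun σ _ => congrArg sSup (hRset σ)]
end
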